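/- arXiv:1002.2368 — 2 statements merged into one kernel-verified Lean document; each statement's English description precedes it below -/
import Mathlib

section
/- Let B be the M2-algebra M2[Sq1,Sq2]/(Sq1² = 0, Sq2² = τ Sq1Sq2Sq1, Sq1Sq2Sq1Sq2 = Sq2Sq1Sq2Sq1). Then B is a free M2-module of rank 8, with basis {1, Sq1, Sq2, Sq2Sq1, Sq1Sq2, Sq1Sq2Sq1, Sq2Sq1Sq2, Sq2Sq1Sq2Sq1}, whose elements lie in topological degrees 0,1,2,3,3,4,5,6 respectively. -/
/-!
STATEMENT 3.  `B = M2⟨Sq¹,Sq²⟩/(Sq¹² = 0, Sq²² = τ Sq¹Sq²Sq¹, Sq¹Sq²Sq¹Sq² = Sq²Sq¹Sq²Sq¹)`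
(the motivic `A(1)`) is a free `M2`-module of rank 8, with basis
`{1, Sq¹, Sq², Sq²Sq¹, Sq¹Sq², Sq¹Sq²Sq¹, Sq²Sq¹Sq², Sq²Sq¹Sq²Sq¹}`,
whose elements lie in topological degrees `0,1,2,3,3,4,5,6` respectively
(`Sq¹` has topological degree 1 and `Sq²` topological degree 2, so the degree of each
basis monomial is the sum of the degrees of its letters; the degree-6 element
`Sq²Sq¹Sq²Sq¹` equals the other length-four word `Sq¹Sq²Sq¹Sq²` by the third relation).
-/

noncomputable section

/-- `M2 = 𝔽₂[τ]`. -/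
abbrev M2 : Type := Polynomial (ZMod 2)

/-- `τ ∈ M2`. -/
abbrev τ : M2 := Polynomial.X

/-- The free (noncommutative) `M2`-algebra on the symbols `Sq¹, Sq²`. -/
abbrev F : Type := FreeAlgebra M2 (Fin 2)

/-- The symbol `Sq¹`. -/
def s1 : F := FreeAlgebra.ι M2 0

/-- The symbol `Sq²`. -/
def s2 : F := FreeAlgebra.ι M2 1

/-- The defining relations of motivic `A(1)`. -/
inductive A1Rel : F → F → Prop
  | adem11 : A1Rel (s1 * s1) 0
  | adem22 : A1Rel (s2 * s2) (τ • (s1 * s2 * s1))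
  | comm4  : A1Rel (s1 * s2 * s1 * s2) (s2 * s1 * s2 * s1)

/-- Motivic `A(1)` = `B`. -/
abbrev A1 : Type := RingQuot A1Rel

/-- `Sq¹ ∈ A(1)`. -/
def Sq1 : A1 := RingQuot.mkAlgHom M2 A1Rel s1

/-- `Sq² ∈ A(1)`. -/
def Sq2 : A1 := RingQuot.mkAlgHom M2 A1Rel s2

/-- The topological degrees `0,1,2,3,3,4,5,6` of the eight basis monomials. -/
def degrees : Fin 8 → ℕ := ![0, 1, 2, 3, 3, 4, 5, 6]

/-! ### Auxiliary material -/

/-- The relations, transported to `A1`. -/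
lemma rel1 : Sq1 * Sq1 = (0 : A1) := by
  simpa [Sq1, map_mul] using RingQuot.mkAlgHom_rel M2 A1Rel.adem11

lemma rel2 : Sq2 * Sq2 = τ • (Sq1 * Sq2 * Sq1) := by
  simpa [Sq1, Sq2, map_mul, map_smul] using RingQuot.mkAlgHom_rel M2 A1Rel.adem22

lemma rel3 : Sq1 * Sq2 * Sq1 * Sq2 = Sq2 * Sq1 * Sq2 * Sq1 := by
  simpa [Sq1, Sq2, map_mul] using RingQuot.mkAlgHom_rel M2 A1Rel.comm4

/-- The eight basis monomials. -/
def mono : Fin 8 → A1 :=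
  ![1, Sq1, Sq2, Sq2 * Sq1, Sq1 * Sq2, Sq1 * Sq2 * Sq1, Sq2 * Sq1 * Sq2,
    Sq2 * Sq1 * Sq2 * Sq1]

/-- The span of the eight monomials. -/
def SS : Submodule M2 A1 := Submodule.span M2 (Set.range mono)

lemma mem_mono (j : Fin 8) : mono j ∈ SS := Submodule.subset_span ⟨j, rfl⟩

lemma mono0 : mono 0 = 1 := rfl
lemma mono1 : mono 1 = Sq1 := rfl
lemma mono2 : mono 2 = Sq2 := rfl
lemma mono3 : mono 3 = Sq2 * Sq1 := rfl
lemma mono4 : mono 4 = Sq1 * Sq2 := rfl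
lemma mono5 : mono 5 = Sq1 * Sq2 * Sq1 := rfl
lemma mono6 : mono 6 = Sq2 * Sq1 * Sq2 := rfl
lemma mono7 : mono 7 = Sq2 * Sq1 * Sq2 * Sq1 := rfl

/-- Products of monomials with `Sq1` on the right. -/
lemma p31 : Sq2 * Sq1 * Sq1 = 0 := by rw [mul_assoc, rel1, mul_zero]
lemma p51 : Sq1 * Sq2 * Sq1 * Sq1 = 0 := by rw [mul_assoc, rel1, mul_zero]
lemma p71 : Sq2 * Sq1 * Sq2 * Sq1 * Sq1 = 0 := by rw [mul_assoc, rel1, mul_zero]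

/-- Products of monomials with `Sq2` on the right. -/
lemma p42 : Sq1 * Sq2 * Sq2 = 0 := by
  have h : Sq1 * Sq2 * Sq2 = Sq1 * (Sq2 * Sq2) := by noncomm_ring
  rw [h, rel2, mul_smul_comm]
  have h2 : Sq1 * (Sq1 * Sq2 * Sq1) = Sq1 * Sq1 * (Sq2 * Sq1) := by noncomm_ring
  rw [h2, rel1, zero_mul, smul_zero]

lemma p62 : Sq2 * Sq1 * Sq2 * Sq2 = 0 := by
  have h : Sq2 * Sq1 * Sq2 * Sq2 = Sq2 * Sq1 * (Sq2 * Sq2) := by noncomm_ring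
  rw [h, rel2, mul_smul_comm]
  have h2 : Sq2 * Sq1 * (Sq1 * Sq2 * Sq1) = Sq2 * (Sq1 * Sq1 * (Sq2 * Sq1)) := by
    noncomm_ring
  rw [h2, rel1, zero_mul, mul_zero, smul_zero]

lemma p72 : Sq2 * Sq1 * Sq2 * Sq1 * Sq2 = 0 := by
  have h1 : Sq2 * Sq1 * Sq2 * Sq1 * Sq2 = Sq2 * (Sq1 * Sq2 * Sq1 * Sq2) := by noncomm_ring
  rw [h1, rel3]
  have h2 : Sq2 * (Sq2 * Sq1 * Sq2 * Sq1) = Sq2 * Sq2 * (Sq1 * Sq2 * Sq1) := by noncomm_ring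
  rw [h2, rel2, smul_mul_assoc]
  have h3 : Sq1 * Sq2 * Sq1 * (Sq1 * Sq2 * Sq1) = Sq1 * Sq2 * (Sq1 * Sq1 * (Sq2 * Sq1)) := by
    noncomm_ring
  rw [h3, rel1, zero_mul, mul_zero, smul_zero]

lemma hr1 : ∀ a ∈ SS, a * Sq1 ∈ SS := by
  have h : SS ≤ SS.comap (LinearMap.mulRight M2 Sq1) := by
    rw [SS, Submodule.span_le]
    rintro _ ⟨j, rfl⟩
    simp only [Set.mem_setOf_eq, SetLike.mem_coe, Submodule.mem_comap,
      LinearMap.mulRight_apply]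
    fin_cases j
    · show mono 0 * _ ∈ _
      rw [mono0, one_mul]; exact mem_mono 1
    · show mono 1 * _ ∈ _
      rw [mono1, rel1]; exact SS.zero_mem
    · show mono 2 * _ ∈ _
      rw [mono2]; exact mem_mono 3
    · show mono 3 * _ ∈ _
      rw [mono3, p31]; exact SS.zero_mem
    · show mono 4 * _ ∈ _
      rw [mono4]; exact mem_mono 5
    · show mono 5 * _ ∈ _
      rw [mono5, p51]; exact SS.zero_mem
    · show mono 6 * _ ∈ _
      rw [mono6]; exact mem_mono 7
    · show mono 7 * _ ∈ _
      rw [mono7, p71]; exact SS.zero_mem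
  exact fun a ha => h ha

lemma hr2 : ∀ a ∈ SS, a * Sq2 ∈ SS := by
  have h : SS ≤ SS.comap (LinearMap.mulRight M2 Sq2) := by
    rw [SS, Submodule.span_le]
    rintro _ ⟨j, rfl⟩
    simp only [Set.mem_setOf_eq, SetLike.mem_coe, Submodule.mem_comap,
      LinearMap.mulRight_apply]
    fin_cases j
    · show mono 0 * _ ∈ _
      rw [mono0, one_mul]; exact mem_mono 2
    · show mono 1 * _ ∈ _
      rw [mono1]; exact mem_mono 4
    · show mono 2 * _ ∈ _
      rw [mono2, rel2]; exact SS.smul_mem τ (mem_mono 5)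
    · show mono 3 * _ ∈ _
      rw [mono3]; exact mem_mono 6
    · show mono 4 * _ ∈ _
      rw [mono4, p42]; exact SS.zero_mem
    · show mono 5 * _ ∈ _
      rw [mono5, rel3]; exact mem_mono 7
    · show mono 6 * _ ∈ _
      rw [mono6, p62]; exact SS.zero_mem
    · show mono 7 * _ ∈ _
      rw [mono7, p72]; exact SS.zero_mem
  exact fun a ha => h ha

lemma hmul : ∀ a ∈ SS, ∀ b ∈ SS, a * b ∈ SS := by
  intro a ha b hb
  have h : SS ≤ SS.comap (LinearMap.mulLeft M2 a) := by
    rw [SS, Submodule.span_le]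
    rintro _ ⟨j, rfl⟩
    simp only [Set.mem_setOf_eq, SetLike.mem_coe, Submodule.mem_comap,
      LinearMap.mulLeft_apply]
    fin_cases j
    · show _ * mono 0 ∈ _
      rw [mono0, mul_one]; exact ha
    · show _ * mono 1 ∈ _
      rw [mono1]; exact hr1 a ha
    · show _ * mono 2 ∈ _
      rw [mono2]; exact hr2 a ha
    · show _ * mono 3 ∈ _
      rw [mono3, ← mul_assoc]; exact hr1 _ (hr2 a ha)
    · show _ * mono 4 ∈ _
      rw [mono4, ← mul_assoc]; exact hr2 _ (hr1 a ha)
    · show _ * mono 5 ∈ _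
      rw [mono5, ← mul_assoc, ← mul_assoc]; exact hr1 _ (hr2 _ (hr1 a ha))
    · show _ * mono 6 ∈ _
      rw [mono6, ← mul_assoc, ← mul_assoc]; exact hr2 _ (hr1 _ (hr2 a ha))
    · show _ * mono 7 ∈ _
      rw [mono7, ← mul_assoc, ← mul_assoc, ← mul_assoc]
      exact hr1 _ (hr2 _ (hr1 _ (hr2 a ha)))
  exact h hb

lemma hspan : ∀ x : A1, x ∈ SS := by
  intro x
  obtain ⟨y, rfl⟩ := RingQuot.mkAlgHom_surjective M2 A1Rel x
  induction y using FreeAlgebra.induction with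
  | grade0 r =>
      rw [AlgHom.commutes, Algebra.algebraMap_eq_smul_one]
      exact SS.smul_mem r (mem_mono 0)
  | grade1 i =>
      fin_cases i
      · exact mem_mono 1
      · exact mem_mono 2
  | mul a b ha hb => rw [map_mul]; exact hmul _ ha _ hb
  | add a b ha hb => rw [map_add]; exact SS.add_mem ha hb

/-! ### The left regular representation on `M2^8` -/

/-- Standard basis of `M2^8`. -/
def bV : Module.Basis (Fin 8) M2 (Fin 8 → M2) := Pi.basisFun M2 (Fin 8)

/-- Left multiplication by `Sq1` on the monomial basis. -/
def LA : (Fin 8 → M2) →ₗ[M2] (Fin 8 → M2) :=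
  bV.constr M2 ![bV 1, 0, bV 4, bV 5, 0, 0, bV 7, 0]

/-- Left multiplication by `Sq2` on the monomial basis. -/
def LB : (Fin 8 → M2) →ₗ[M2] (Fin 8 → M2) :=
  bV.constr M2 ![bV 2, bV 3, τ • bV 5, 0, bV 6, bV 7, 0, 0]

lemma LA_b (j : Fin 8) :
    LA (bV j) = ![bV 1, 0, bV 4, bV 5, 0, 0, bV 7, 0] j := Module.Basis.constr_basis _ _ _ _

lemma LB_b (j : Fin 8) :
    LB (bV j) = ![bV 2, bV 3, τ • bV 5, 0, bV 6, bV 7, 0, 0] j := Module.Basis.constr_basis _ _ _ _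

@[simp] lemma vec8_5 {α : Type*} (a b c d e f g h : α) : ![a,b,c,d,e,f,g,h] 5 = f := rfl
@[simp] lemma vec8_6 {α : Type*} (a b c d e f g h : α) : ![a,b,c,d,e,f,g,h] 6 = g := rfl
@[simp] lemma vec8_7 {α : Type*} (a b c d e f g h : α) : ![a,b,c,d,e,f,g,h] 7 = h := rfl

lemma LA0 : LA (bV 0) = bV 1 := LA_b 0
lemma LA1 : LA (bV 1) = 0 := LA_b 1
lemma LA2 : LA (bV 2) = bV 4 := LA_b 2
lemma LA3 : LA (bV 3) = bV 5 := LA_b 3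
lemma LA4 : LA (bV 4) = 0 := LA_b 4
lemma LA5 : LA (bV 5) = 0 := LA_b 5
lemma LA6 : LA (bV 6) = bV 7 := LA_b 6
lemma LA7 : LA (bV 7) = 0 := LA_b 7
lemma LB0 : LB (bV 0) = bV 2 := LB_b 0
lemma LB1 : LB (bV 1) = bV 3 := LB_b 1
lemma LB2 : LB (bV 2) = τ • bV 5 := LB_b 2
lemma LB3 : LB (bV 3) = 0 := LB_b 3
lemma LB4 : LB (bV 4) = bV 6 := LB_b 4
lemma LB5 : LB (bV 5) = bV 7 := LB_b 5
lemma LB6 : LB (bV 6) = 0 := LB_b 6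
lemma LB7 : LB (bV 7) = 0 := LB_b 7

lemma hAA0 : LA (LA (bV 0)) = (0 : Fin 8 → M2) := by
  simp only [LA0, LA1, LA2, LA3, LA4, LA5, LA6, LA7, LB0, LB1, LB2, LB3, LB4, LB5, LB6, LB7, map_zero, map_smul, smul_zero]

lemma hAA1 : LA (LA (bV 1)) = (0 : Fin 8 → M2) := by
  simp only [LA0, LA1, LA2, LA3, LA4, LA5, LA6, LA7, LB0, LB1, LB2, LB3, LB4, LB5, LB6, LB7, map_zero, map_smul, smul_zero]

lemma hAA2 : LA (LA (bV 2)) = (0 : Fin 8 → M2) := by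
  simp only [LA0, LA1, LA2, LA3, LA4, LA5, LA6, LA7, LB0, LB1, LB2, LB3, LB4, LB5, LB6, LB7, map_zero, map_smul, smul_zero]

lemma hAA3 : LA (LA (bV 3)) = (0 : Fin 8 → M2) := by
  simp only [LA0, LA1, LA2, LA3, LA4, LA5, LA6, LA7, LB0, LB1, LB2, LB3, LB4, LB5, LB6, LB7, map_zero, map_smul, smul_zero]

lemma hAA4 : LA (LA (bV 4)) = (0 : Fin 8 → M2) := by
  simp only [LA0, LA1, LA2, LA3, LA4, LA5, LA6, LA7, LB0, LB1, LB2, LB3, LB4, LB5, LB6, LB7, map_zero, map_smul, smul_zero]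

lemma hAA5 : LA (LA (bV 5)) = (0 : Fin 8 → M2) := by
  simp only [LA0, LA1, LA2, LA3, LA4, LA5, LA6, LA7, LB0, LB1, LB2, LB3, LB4, LB5, LB6, LB7, map_zero, map_smul, smul_zero]

lemma hAA6 : LA (LA (bV 6)) = (0 : Fin 8 → M2) := by
  simp only [LA0, LA1, LA2, LA3, LA4, LA5, LA6, LA7, LB0, LB1, LB2, LB3, LB4, LB5, LB6, LB7, map_zero, map_smul, smul_zero]

lemma hAA7 : LA (LA (bV 7)) = (0 : Fin 8 → M2) := by
  simp only [LA0, LA1, LA2, LA3, LA4, LA5, LA6, LA7, LB0, LB1, LB2, LB3, LB4, LB5, LB6, LB7, map_zero, map_smul, smul_zero]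

lemma hBB0 : LB (LB (bV 0)) = τ • LA (LB (LA (bV 0))) := by
  simp only [LA0, LA1, LA2, LA3, LA4, LA5, LA6, LA7, LB0, LB1, LB2, LB3, LB4, LB5, LB6, LB7, map_zero, map_smul, smul_zero]

lemma hBB1 : LB (LB (bV 1)) = τ • LA (LB (LA (bV 1))) := by
  simp only [LA0, LA1, LA2, LA3, LA4, LA5, LA6, LA7, LB0, LB1, LB2, LB3, LB4, LB5, LB6, LB7, map_zero, map_smul, smul_zero]

lemma hBB2 : LB (LB (bV 2)) = τ • LA (LB (LA (bV 2))) := by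
  simp only [LA0, LA1, LA2, LA3, LA4, LA5, LA6, LA7, LB0, LB1, LB2, LB3, LB4, LB5, LB6, LB7, map_zero, map_smul, smul_zero]

lemma hBB3 : LB (LB (bV 3)) = τ • LA (LB (LA (bV 3))) := by
  simp only [LA0, LA1, LA2, LA3, LA4, LA5, LA6, LA7, LB0, LB1, LB2, LB3, LB4, LB5, LB6, LB7, map_zero, map_smul, smul_zero]

lemma hBB4 : LB (LB (bV 4)) = τ • LA (LB (LA (bV 4))) := by
  simp only [LA0, LA1, LA2, LA3, LA4, LA5, LA6, LA7, LB0, LB1, LB2, LB3, LB4, LB5, LB6, LB7, map_zero, map_smul, smul_zero]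

lemma hBB5 : LB (LB (bV 5)) = τ • LA (LB (LA (bV 5))) := by
  simp only [LA0, LA1, LA2, LA3, LA4, LA5, LA6, LA7, LB0, LB1, LB2, LB3, LB4, LB5, LB6, LB7, map_zero, map_smul, smul_zero]

lemma hBB6 : LB (LB (bV 6)) = τ • LA (LB (LA (bV 6))) := by
  simp only [LA0, LA1, LA2, LA3, LA4, LA5, LA6, LA7, LB0, LB1, LB2, LB3, LB4, LB5, LB6, LB7, map_zero, map_smul, smul_zero]

lemma hBB7 : LB (LB (bV 7)) = τ • LA (LB (LA (bV 7))) := by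
  simp only [LA0, LA1, LA2, LA3, LA4, LA5, LA6, LA7, LB0, LB1, LB2, LB3, LB4, LB5, LB6, LB7, map_zero, map_smul, smul_zero]

lemma hABAB0 : LA (LB (LA (LB (bV 0)))) = LB (LA (LB (LA (bV 0)))) := by
  simp only [LA0, LA1, LA2, LA3, LA4, LA5, LA6, LA7, LB0, LB1, LB2, LB3, LB4, LB5, LB6, LB7, map_zero, map_smul, smul_zero]

lemma hABAB1 : LA (LB (LA (LB (bV 1)))) = LB (LA (LB (LA (bV 1)))) := by
  simp only [LA0, LA1, LA2, LA3, LA4, LA5, LA6, LA7, LB0, LB1, LB2, LB3, LB4, LB5, LB6, LB7, map_zero, map_smul, smul_zero]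

lemma hABAB2 : LA (LB (LA (LB (bV 2)))) = LB (LA (LB (LA (bV 2)))) := by
  simp only [LA0, LA1, LA2, LA3, LA4, LA5, LA6, LA7, LB0, LB1, LB2, LB3, LB4, LB5, LB6, LB7, map_zero, map_smul, smul_zero]

lemma hABAB3 : LA (LB (LA (LB (bV 3)))) = LB (LA (LB (LA (bV 3)))) := by
  simp only [LA0, LA1, LA2, LA3, LA4, LA5, LA6, LA7, LB0, LB1, LB2, LB3, LB4, LB5, LB6, LB7, map_zero, map_smul, smul_zero]

lemma hABAB4 : LA (LB (LA (LB (bV 4)))) = LB (LA (LB (LA (bV 4)))) := by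
  simp only [LA0, LA1, LA2, LA3, LA4, LA5, LA6, LA7, LB0, LB1, LB2, LB3, LB4, LB5, LB6, LB7, map_zero, map_smul, smul_zero]

lemma hABAB5 : LA (LB (LA (LB (bV 5)))) = LB (LA (LB (LA (bV 5)))) := by
  simp only [LA0, LA1, LA2, LA3, LA4, LA5, LA6, LA7, LB0, LB1, LB2, LB3, LB4, LB5, LB6, LB7, map_zero, map_smul, smul_zero]

lemma hABAB6 : LA (LB (LA (LB (bV 6)))) = LB (LA (LB (LA (bV 6)))) := by
  simp only [LA0, LA1, LA2, LA3, LA4, LA5, LA6, LA7, LB0, LB1, LB2, LB3, LB4, LB5, LB6, LB7, map_zero, map_smul, smul_zero]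

lemma hABAB7 : LA (LB (LA (LB (bV 7)))) = LB (LA (LB (LA (bV 7)))) := by
  simp only [LA0, LA1, LA2, LA3, LA4, LA5, LA6, LA7, LB0, LB1, LB2, LB3, LB4, LB5, LB6, LB7, map_zero, map_smul, smul_zero]

lemma hAA : LA * LA = 0 := by
  apply bV.ext
  intro j
  fin_cases j
  · exact hAA0
  · exact hAA1
  · exact hAA2
  · exact hAA3
  · exact hAA4
  · exact hAA5
  · exact hAA6
  · exact hAA7

lemma hBB : LB * LB = τ • (LA * LB * LA) := by
  apply bV.ext
  intro j
  fin_cases j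
  · exact hBB0
  · exact hBB1
  · exact hBB2
  · exact hBB3
  · exact hBB4
  · exact hBB5
  · exact hBB6
  · exact hBB7

lemma hABAB : LA * LB * LA * LB = LB * LA * LB * LA := by
  apply bV.ext
  intro j
  fin_cases j
  · exact hABAB0
  · exact hABAB1
  · exact hABAB2
  · exact hABAB3
  · exact hABAB4
  · exact hABAB5
  · exact hABAB6
  · exact hABAB7

/-- The representation on the free algebra. -/
def frep : F →ₐ[M2] Module.End M2 (Fin 8 → M2) :=
  FreeAlgebra.lift M2 ![LA, LB]

lemma frep_s1 : frep s1 = LA := by simp [frep, s1]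
lemma frep_s2 : frep s2 = LB := by simp [frep, s2]

lemma frep_rel : ∀ ⦃x y : F⦄, A1Rel x y → frep x = frep y := by
  intro x y h
  cases h with
  | adem11 => simp [map_mul, frep_s1, hAA]
  | adem22 => simp [map_mul, map_smul, frep_s1, frep_s2, hBB]
  | comm4 => simp [map_mul, frep_s1, frep_s2, hABAB]

/-- The representation of `A1`. -/
def rep : A1 →ₐ[M2] Module.End M2 (Fin 8 → M2) :=
  RingQuot.liftAlgHom M2 ⟨frep, frep_rel⟩

lemma rep_Sq1 : rep Sq1 = LA := by
  rw [rep, Sq1, RingQuot.liftAlgHom_mkAlgHom_apply, frep_s1]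

lemma rep_Sq2 : rep Sq2 = LB := by
  rw [rep, Sq2, RingQuot.liftAlgHom_mkAlgHom_apply, frep_s2]

/-- Evaluation of the representation at the basis vector `e₀`. -/
def φ : A1 →ₗ[M2] (Fin 8 → M2) where
  toFun a := rep a (bV 0)
  map_add' a b := by simp [map_add]
  map_smul' r a := by simp [map_smul]

lemma φ_apply (a : A1) : φ a = rep a (bV 0) := rfl

lemma phim0 : φ (mono 0) = bV 0 := by
  rw [φ_apply, mono0, map_one, Module.End.one_apply]
lemma phim1 : φ (mono 1) = bV 1 := by
  rw [φ_apply, mono1, rep_Sq1, LA0]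
lemma phim2 : φ (mono 2) = bV 2 := by
  rw [φ_apply, mono2, rep_Sq2, LB0]
lemma phim3 : φ (mono 3) = bV 3 := by
  rw [φ_apply, mono3, map_mul, rep_Sq1, rep_Sq2, Module.End.mul_apply, LA0, LB1]
lemma phim4 : φ (mono 4) = bV 4 := by
  rw [φ_apply, mono4, map_mul, rep_Sq1, rep_Sq2, Module.End.mul_apply, LB0, LA2]
lemma phim5 : φ (mono 5) = bV 5 := by
  rw [φ_apply, mono5, map_mul, map_mul, rep_Sq1, rep_Sq2, Module.End.mul_apply,
    Module.End.mul_apply, LA0, LB1, LA3]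
lemma phim6 : φ (mono 6) = bV 6 := by
  rw [φ_apply, mono6, map_mul, map_mul, rep_Sq1, rep_Sq2, Module.End.mul_apply,
    Module.End.mul_apply, LB0, LA2, LB4]
lemma phim7 : φ (mono 7) = bV 7 := by
  rw [φ_apply, mono7, map_mul, map_mul, map_mul, rep_Sq1, rep_Sq2, Module.End.mul_apply,
    Module.End.mul_apply, Module.End.mul_apply, LA0, LB1, LA3, LB5]

lemma φ_mono (j : Fin 8) : φ (mono j) = bV j := by
  fin_cases j
  · exact phim0
  · exact phim1
  · exact phim2
  · exact phim3
  · exact phim4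
  · exact phim5
  · exact phim6
  · exact phim7

/-- The candidate inverse. -/
def ψ : (Fin 8 → M2) →ₗ[M2] A1 := bV.constr M2 mono

lemma ψ_b (j : Fin 8) : ψ (bV j) = mono j := bV.constr_basis M2 mono j

lemma φψ : φ.comp ψ = LinearMap.id := by
  apply bV.ext
  intro j
  rw [LinearMap.comp_apply, ψ_b, φ_mono, LinearMap.id_apply]

theorem A1_free_of_rank_eight :
    ∃ b : Module.Basis (Fin 8) M2 A1,
      b 0 = 1 ∧
      b 1 = Sq1 ∧
      b 2 = Sq2 ∧
      b 3 = Sq2 * Sq1 ∧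
      b 4 = Sq1 * Sq2 ∧
      b 5 = Sq1 * Sq2 * Sq1 ∧
      b 6 = Sq2 * Sq1 * Sq2 ∧
      b 7 = Sq2 * Sq1 * Sq2 * Sq1 := by
  have hinj : Function.Injective ψ := by
    have h : ∀ v, φ (ψ v) = v := fun v => by
      simpa using LinearMap.congr_fun φψ v
    exact Function.LeftInverse.injective h
  have hsurj : Function.Surjective ψ := by
    rw [← LinearMap.range_eq_top]
    show LinearMap.range (bV.constr M2 mono) = ⊤
    rw [Module.Basis.constr_range, eq_top_iff]
    rintro x -
    exact hspan x
  let e := LinearEquiv.ofBijective ψ ⟨hinj, hsurj⟩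
  have he : ∀ j : Fin 8, (bV.map e) j = mono j := fun j => by
    rw [Module.Basis.map_apply]
    exact ψ_b j
  exact ⟨bV.map e, he 0, he 1, he 2, he 3, he 4, he 5, he 6, he 7⟩

end
end

section
/- In the ring E = F2[τ]⟨h0, h1, α, β⟩/(h0h1, τh1³, h1α, α² − h0²β) (commutative bigraded over F2[τ]), the element h1³ is nonzero and annihilated by τ, while h1² is not annihilated by τ; moreover h1^k ≠ 0 for all k ≥ 0. -/
set_option synthInstance.maxHeartbeats 1000000

/-!
STATEMENT 12.  In `E = ℤ₂[τ, h₀, h₁, α, β]/(2h₁, h₀h₁, τh₁³, h₁α, α² − h₀²β)`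
(the ring `Ext_{A(1)}(M₂,M₂)`), the element `h₁³` is nonzero and is annihilated by `τ`,
while `h₁²` is not annihilated by `τ`; moreover `h₁^k ≠ 0` for all `k ≥ 0`
(the motivic phenomenon that `η^k ≠ 0` for all `k`).
-/

noncomputable section

open MvPolynomial

/-- `E := ℤ₂[τ, h₀, h₁, α, β]/(2h₁, h₀h₁, τh₁³, h₁α, α² − h₀²β)`.
Variables: `0 = τ`, `1 = h₀`, `2 = h₁`, `3 = α`, `4 = β`. -/
abbrev ExtA1 : Type :=
  MvPolynomial (Fin 5) ℤ_[2] ⧸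
    (Ideal.span {(2 : MvPolynomial (Fin 5) ℤ_[2]) * X 2, X 1 * X 2, X 0 * X 2 ^ 3,
      X 2 * X 3, X 3 ^ 2 - X 1 ^ 2 * X 4})

/-- The class of a variable: `0 = τ`, `1 = h₀`, `2 = h₁`, `3 = α`, `4 = β`. -/
def e (i : Fin 5) : ExtA1 := Ideal.Quotient.mk _ (X i)

/-- First witness map: kill everything but `h₁ ↦ X`. -/
noncomputable def φ1 : MvPolynomial (Fin 5) ℤ_[2] →+* Polynomial (ZMod 2) :=
  eval₂Hom (Polynomial.C.comp (PadicInt.toZMod)) ![0, 0, Polynomial.X, 0, 0]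

noncomputable def ψ1 : ExtA1 →+* Polynomial (ZMod 2) :=
  Ideal.Quotient.lift _ φ1 (by
    intro a ha
    refine (Ideal.span_le.mpr ?_ : _ ≤ RingHom.ker φ1) ha
    intro x hx
    simp only [Set.mem_insert_iff, Set.mem_singleton_iff] at hx
    rcases hx with h | h | h | h | h <;> subst h <;>
      simp [RingHom.mem_ker, φ1, CharTwo.two_eq_zero])

lemma ψ1_e2 : ψ1 (e 2) = Polynomial.X := by
  simp [ψ1, e, φ1]

/-- Second witness ring: `F₂[u][t]/(t³)`, with `τ ↦ u`, `h₁ ↦ t`. -/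
abbrev R2 : Type := Polynomial (Polynomial (ZMod 2)) ⧸
    Ideal.span {(Polynomial.X : Polynomial (Polynomial (ZMod 2))) ^ 3}

noncomputable def φ2 : MvPolynomial (Fin 5) ℤ_[2] →+* Polynomial (Polynomial (ZMod 2)) :=
  eval₂Hom ((Polynomial.C.comp Polynomial.C).comp (PadicInt.toZMod))
    ![Polynomial.C Polynomial.X, 0, Polynomial.X, 0, 0]

noncomputable def ψ2 : ExtA1 →+* R2 :=
  Ideal.Quotient.lift _ ((Ideal.Quotient.mk _).comp φ2) (by
    intro a ha
    refine (Ideal.span_le.mpr ?_ : _ ≤ RingHom.ker _) ha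
    intro x hx
    simp only [Set.mem_insert_iff, Set.mem_singleton_iff] at hx
    rcases hx with h | h | h | h | h <;> subst h <;>
      simp only [SetLike.mem_coe, RingHom.mem_ker, RingHom.comp_apply, Ideal.Quotient.eq_zero_iff_mem]
    · rw [show φ2 (2 * X 2) = 0 by simp [φ2, CharTwo.two_eq_zero]]; exact Ideal.zero_mem _
    · rw [show φ2 (X 1 * X 2) = 0 by simp [φ2]]; exact Ideal.zero_mem _
    · rw [show φ2 (X 0 * X 2 ^ 3) = Polynomial.C Polynomial.X * Polynomial.X ^ 3 by simp [φ2]]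
      exact Ideal.mem_span_singleton.mpr ⟨Polynomial.C Polynomial.X, mul_comm _ _⟩
    · rw [show φ2 (X 2 * X 3) = 0 by simp [φ2]]; exact Ideal.zero_mem _
    · rw [show φ2 (X 3 ^ 2 - X 1 ^ 2 * X 4) = 0 by simp [φ2]]; exact Ideal.zero_mem _)

theorem eta_powers_nonzero :
    -- `h₁³ ≠ 0`
    (e 2 ^ 3 ≠ 0) ∧
    -- `τ h₁³ = 0`
    (e 0 * e 2 ^ 3 = 0) ∧
    -- `τ h₁² ≠ 0`
    (e 0 * e 2 ^ 2 ≠ 0) ∧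
    -- `h₁^k ≠ 0` for all `k ≥ 0`
    (∀ k : ℕ, e 2 ^ k ≠ 0) := by
  have hk : ∀ k : ℕ, e 2 ^ k ≠ 0 := by
    intro k h
    have : ψ1 (e 2 ^ k) = 0 := by rw [h]; exact map_zero _
    rw [map_pow, ψ1_e2] at this
    exact pow_ne_zero k Polynomial.X_ne_zero this
  refine ⟨hk 3, ?_, ?_, hk⟩
  · rw [show e 0 * e 2 ^ 3 = Ideal.Quotient.mk _ (X 0 * X 2 ^ 3) from by
      simp [e, map_mul, map_pow]]
    rw [Ideal.Quotient.eq_zero_iff_mem]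
    exact Ideal.subset_span (by simp)
  · intro h
    have h2 : ψ2 (e 0 * e 2 ^ 2) = 0 := by rw [h]; exact map_zero _
    have he : ψ2 (e 0 * e 2 ^ 2) =
        Ideal.Quotient.mk _ (Polynomial.C Polynomial.X * Polynomial.X ^ 2) := by
      simp [ψ2, e, φ2]
    rw [he, Ideal.Quotient.eq_zero_iff_mem, Ideal.mem_span_singleton] at h2
    have hne : (Polynomial.C Polynomial.X * Polynomial.X ^ 2 :
        Polynomial (Polynomial (ZMod 2))) ≠ 0 := by
      intro h0
      simp at h0
    have := Polynomial.natDegree_le_of_dvd h2 hne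
    simp [Polynomial.natDegree_X_pow, Polynomial.natDegree_mul, Polynomial.natDegree_C] at this


end
end
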